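/- arXiv:2509.18747 — 6 statements merged into one kernel-verified Lean document; each statement's English description precedes it below -/
import Mathlib

section
/- For all x ≠ 0, the derivative of Φ at x lies in the open interval (0, 1). -/
/-! After clearing the positive denominator `x (eˣ - 1)`, the bounds `0 < Φ' x < 1` are the strict
tangent-line inequalities `1 - x < e⁻ˣ` and `x + 1 < eˣ` for the exponential. -/

noncomputable def Phi (x : ℝ) : ℝ := if x = 0 then 0 else Real.log ((Real.exp x - 1) / x)

open Real

lemma mul_exp_sub_one_pos {x : ℝ} (hx : x ≠ 0) : 0 < x * (exp x - 1) := by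
  rcases hx.lt_or_gt with h | h
  · exact mul_pos_of_neg_of_neg h (by linarith [exp_lt_one_iff.2 h])
  · exact mul_pos h (by linarith [one_lt_exp_iff.2 h])

lemma exp_sub_one_lt_mul_exp {x : ℝ} (hx : x ≠ 0) : exp x - 1 < x * exp x := by
  have h := mul_lt_mul_of_pos_right (one_sub_lt_exp_neg hx) (exp_pos x)
  rw [← exp_add, neg_add_cancel, exp_zero] at h
  linarith

lemma hasDerivAt_Phi {x : ℝ} (hx : x ≠ 0) :
    HasDerivAt Phi ((x * exp x - (exp x - 1)) / (x * (exp x - 1))) x := by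
  have hexp : exp x - 1 ≠ 0 := sub_ne_zero.2 (mt (exp_eq_one_iff x).1 hx)
  have hquot : HasDerivAt (fun y => (exp y - 1) / y) ((exp x * x - (exp x - 1) * 1) / x ^ 2) x :=
    ((hasDerivAt_exp x).sub_const 1).div (hasDerivAt_id x) hx
  refine (hquot.log (div_ne_zero hexp hx)).congr_of_eventuallyEq ?_ |>.congr_deriv ?_
  · filter_upwards [eventually_ne_nhds hx] with y hy
    simp [Phi, hy]
  · field_simp

theorem deriv_Phi_mem_Ioo (x : ℝ) (hx : x ≠ 0) :
    deriv Phi x ∈ Set.Ioo (0 : ℝ) 1 := by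
  have hden := mul_exp_sub_one_pos hx
  rw [(hasDerivAt_Phi hx).deriv, Set.mem_Ioo, div_lt_one hden]
  exact ⟨div_pos (sub_pos.2 (exp_sub_one_lt_mul_exp hx)) hden, by linarith [add_one_lt_exp hx]⟩
end

section
/- The function Φ, defined by Φ(x) = ln((e^x − 1)/x) for x ≠ 0 and Φ(0) = 0, is 1-Lipschitz on ℝ: |Φ(x) − Φ(y)| ≤ |x − y| for all real x, y. -/
open Real intervalIntegral MeasureTheory

theorem abs_sub_le_of_monotone_of_monotone_sub {f : ℝ → ℝ} (hf : Monotone f)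
    (hf' : Monotone fun x => x - f x) (x y : ℝ) : |f x - f y| ≤ |x - y| := by
  wlog hxy : x ≤ y generalizing x y
  · rw [abs_sub_comm, abs_sub_comm x]
    exact this y x (le_of_not_ge hxy)
  have hf'xy : x - f x ≤ y - f y := hf' hxy
  rw [abs_sub_comm x]
  exact abs_le_abs (by linarith [hf hxy]) (by linarith)

noncomputable def expMean (x : ℝ) : ℝ := ∫ t in (0 : ℝ)..1, exp (t * x)

theorem intervalIntegrable_exp_mul_right (x a b : ℝ) :
    IntervalIntegrable (fun t => exp (t * x)) volume a b :=
  (by fun_prop : Continuous fun t => exp (t * x)).intervalIntegrable a b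

theorem expMean_zero : expMean 0 = 1 := by simp [expMean]

theorem expMean_of_ne_zero {x : ℝ} (hx : x ≠ 0) : expMean x = (exp x - 1) / x := by
  rw [expMean, integral_comp_mul_right (fun u => exp u) hx, integral_exp]
  simp [div_eq_inv_mul]

theorem expMean_pos (x : ℝ) : 0 < expMean x :=
  intervalIntegral_pos_of_pos (intervalIntegrable_exp_mul_right x 0 1) (fun _ => exp_pos _)
    zero_lt_one

theorem expMean_monotone : Monotone expMean := fun x y hxy =>
  integral_mono_on zero_le_one (intervalIntegrable_exp_mul_right x 0 1)
    (intervalIntegrable_exp_mul_right y 0 1)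
    fun _ ht => exp_le_exp.mpr (mul_le_mul_of_nonneg_left hxy ht.1)

theorem expMean_neg (x : ℝ) : expMean (-x) = exp (-x) * expMean x := by
  have hreflect : expMean x = ∫ t in (0 : ℝ)..1, exp ((1 - t) * x) := by
    rw [integral_comp_sub_left (fun t => exp (t * x)) 1]
    simp [expMean]
  rw [hreflect, ← intervalIntegral.integral_const_mul, expMean]
  congr 1 with t
  rw [← exp_add]
  ring_nf

theorem Phi_eq_log_expMean (x : ℝ) : Phi x = log (expMean x) := by
  rcases eq_or_ne x 0 with rfl | hx
  · simp [Phi, expMean_zero]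
  · simp [Phi, hx, expMean_of_ne_zero hx]

theorem Phi_monotone : Monotone Phi := fun x y hxy => by
  rw [Phi_eq_log_expMean, Phi_eq_log_expMean]
  exact log_le_log (expMean_pos x) (expMean_monotone hxy)

theorem Phi_neg (x : ℝ) : Phi (-x) = Phi x - x := by
  rw [Phi_eq_log_expMean, Phi_eq_log_expMean, expMean_neg,
    log_mul (exp_ne_zero _) (expMean_pos x).ne', log_exp]
  ring

theorem Phi_lipschitz : ∀ x y : ℝ, |Phi x - Phi y| ≤ |x - y| := by
  refine abs_sub_le_of_monotone_of_monotone_sub Phi_monotone fun x y hxy => ?_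
  have h := Phi_monotone (neg_le_neg hxy)
  rw [Phi_neg, Phi_neg] at h
  linarith
end

section
/- The function Ψ satisfies lim_{x→−∞} Ψ(x) = 0 and lim_{x→+∞} Ψ(x) = 1; together with its monotonicity and continuity, Ψ is a cumulative distribution function on ℝ. -/
/-!
Write `K` for the cumulant generating function `t ↦ log 𝔼[exp (t U)]` of a uniform random
variable `U` on `[0, 1]`, so that `K t = log ((exp t - 1) / t)` for `t ≠ 0`, `K 0 = 0` and
`K' 0 = 𝔼[U] = 1 / 2`. Then `Ψ = dslope K 0` is the slope of `K` at `0`; a cumulant generating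
function is convex (its second derivative is a variance), so this slope is monotone, and it is
continuous because `K` is differentiable. Since `1 - U` is again uniform, `K (-t) = K t - t`,
i.e. `Ψ (-t) = 1 - Ψ t`, so the limit at `-∞` follows from the limit `1` at `+∞`, where
`K t = t + O (log t)`.
-/

open Filter Topology

noncomputable def Psi (x : ℝ) : ℝ :=
  if x = 0 then 1 / 2 else (1 / x) * Real.log ((Real.exp x - 1) / x)

open Real Set MeasureTheory ProbabilityTheory

theorem ProbabilityTheory.convexOn_cgf {Ω : Type*} {mΩ : MeasurableSpace Ω} {μ : Measure Ω}
    {X : Ω → ℝ} : ConvexOn ℝ (interior (integrableExpSet X μ)) (cgf X μ) := by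
  refine convexOn_of_deriv2_nonneg' convex_integrableExpSet.interior
    (fun t ht ↦ (analyticAt_cgf ht).differentiableAt.differentiableWithinAt)
    (fun t ht ↦ (analyticAt_cgf ht).deriv.differentiableAt.differentiableWithinAt) fun t ht ↦ ?_
  rw [← iteratedDeriv_eq_iterate, iteratedDeriv_two_cgf_eq_integral ht]
  exact div_nonneg (integral_nonneg fun ω ↦ by positivity) mgf_nonneg

theorem ConvexOn.monotoneOn_dslope {S : Set ℝ} {f : ℝ → ℝ} {a : ℝ} (hf : ConvexOn ℝ S f)
    (ha : a ∈ S) (hfa : DifferentiableAt ℝ f a) : MonotoneOn (dslope f a) S := by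
  intro x hx y hy hxy
  rcases hxy.eq_or_lt with rfl | hxy
  · rfl
  obtain rfl | hxa := eq_or_ne x a
  · rw [dslope_same, dslope_of_ne _ hxy.ne']
    exact hf.le_slope_of_hasDerivAt hx hy hxy hfa.hasDerivAt
  obtain rfl | hya := eq_or_ne y a
  · rw [dslope_same, dslope_of_ne _ hxa, slope_comm]
    exact hf.slope_le_of_hasDerivAt hx hy hxy hfa.hasDerivAt
  rw [dslope_of_ne _ hxa, dslope_of_ne _ hya]
  exact hf.slope_mono ha ⟨hx, hxa⟩ ⟨hy, hya⟩ hxy.le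

noncomputable def uniformCgf : ℝ → ℝ := cgf id (volume.restrict (Ioc (0 : ℝ) 1))

lemma integrableExpSet_uniform : integrableExpSet id (volume.restrict (Ioc (0 : ℝ) 1)) = univ :=
  eq_univ_of_forall fun t ↦ (by fun_prop : Continuous fun x : ℝ ↦ exp (t * x)).integrableOn_Ioc

lemma convexOn_uniformCgf : ConvexOn ℝ univ uniformCgf := by
  have h := convexOn_cgf (X := id) (μ := volume.restrict (Ioc (0 : ℝ) 1))
  rwa [integrableExpSet_uniform, interior_univ] at h

lemma differentiable_uniformCgf : Differentiable ℝ uniformCgf := fun _ ↦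
  (analyticAt_cgf (by simp [integrableExpSet_uniform])).differentiableAt

lemma deriv_uniformCgf_zero : deriv uniformCgf 0 = 1 / 2 := by
  rw [uniformCgf, deriv_cgf_zero (by simp [integrableExpSet_uniform])]
  simp [← intervalIntegral.integral_of_le zero_le_one]

lemma mgf_uniform {t : ℝ} (ht : t ≠ 0) :
    mgf id (volume.restrict (Ioc (0 : ℝ) 1)) t = (exp t - 1) / t := by
  rw [mgf, ← intervalIntegral.integral_of_le zero_le_one]
  simp only [id, intervalIntegral.integral_comp_mul_left (fun x ↦ exp x) ht, integral_exp,
    mul_zero, mul_one, exp_zero, smul_eq_mul, inv_mul_eq_div]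

lemma uniformCgf_zero : uniformCgf 0 = 0 := by
  simp [uniformCgf, cgf_zero']

lemma uniformCgf_of_ne_zero {t : ℝ} (ht : t ≠ 0) : uniformCgf t = log ((exp t - 1) / t) := by
  rw [uniformCgf, cgf, mgf_uniform ht]

lemma Psi_eq_dslope : Psi = dslope uniformCgf 0 := by
  ext x
  obtain rfl | hx := eq_or_ne x 0
  · rw [dslope_same, deriv_uniformCgf_zero, Psi, if_pos rfl]
  · rw [dslope_of_ne _ hx, slope_def_field, uniformCgf_zero, uniformCgf_of_ne_zero hx, Psi,
      if_neg hx]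
    ring

lemma Psi_neg (x : ℝ) : Psi (-x) = 1 - Psi x := by
  obtain rfl | hx := eq_or_ne x 0
  · norm_num [Psi]
  have hq : (exp x - 1) / x ≠ 0 := div_ne_zero (sub_ne_zero.2 (exp_eq_one_iff _ |>.not.2 hx)) hx
  have hflip : (exp (-x) - 1) / -x = exp (-x) * ((exp x - 1) / x) := by
    rw [exp_neg]
    field_simp
    ring
  rw [Psi, Psi, if_neg (neg_ne_zero.2 hx), if_neg hx, hflip, log_mul (exp_ne_zero _) hq, log_exp]
  field_simp
  ring

lemma Psi_eq_one_add_of_pos {x : ℝ} (hx : 0 < x) : Psi x = 1 + (log (1 - exp (-x)) - log x) / x := by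
  have h1 : 0 < 1 - exp (-x) := sub_pos.2 (exp_lt_one_iff.2 (neg_neg_of_pos hx))
  have hsplit : (exp x - 1) / x = exp x * (1 - exp (-x)) / x := by
    rw [mul_sub, mul_one, ← exp_add, add_neg_cancel, exp_zero]
  rw [Psi, if_neg hx.ne', hsplit, log_div (by positivity) hx.ne', log_mul (exp_ne_zero _) h1.ne',
    log_exp]
  field_simp
  ring

lemma tendsto_Psi_atTop : Tendsto Psi atTop (𝓝 1) := by
  have hexp : Tendsto (fun x ↦ log (1 - exp (-x))) atTop (𝓝 0) := by
    simpa using (tendsto_const_nhds.sub tendsto_exp_neg_atTop_nhds_zero).log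
      (by norm_num : (1 : ℝ) - 0 ≠ 0)
  have hlim : Tendsto (fun x ↦ 1 + (log (1 - exp (-x)) / x - log x / x)) atTop (𝓝 1) := by
    simpa using ((hexp.div_atTop tendsto_id).sub
      isLittleO_log_id_atTop.tendsto_div_nhds_zero).const_add 1
  refine hlim.congr' ?_
  filter_upwards [eventually_gt_atTop 0] with x hx
  rw [Psi_eq_one_add_of_pos hx, sub_div]

lemma tendsto_Psi_atBot : Tendsto Psi atBot (𝓝 0) := by
  have h := (tendsto_Psi_atTop.comp tendsto_neg_atBot_atTop).const_sub 1
  rw [sub_self] at h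
  exact h.congr fun x ↦ by simp [Psi_neg]

theorem Psi_is_cdf :
    Filter.Tendsto Psi Filter.atBot (nhds 0) ∧
    Filter.Tendsto Psi Filter.atTop (nhds 1) ∧
    Monotone Psi ∧ Continuous Psi := by
  refine ⟨tendsto_Psi_atBot, tendsto_Psi_atTop, ?_, ?_⟩
  · rw [Psi_eq_dslope, ← monotoneOn_univ]
    exact convexOn_uniformCgf.monotoneOn_dslope (mem_univ 0) (differentiable_uniformCgf 0)
  · rw [Psi_eq_dslope, ← continuousOn_univ, continuousOn_dslope univ_mem]
    exact ⟨differentiable_uniformCgf.continuous.continuousOn, differentiable_uniformCgf 0⟩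
end

section
/- For every real x, every c > 0, and every ε ∈ (0,1): 0 ≤ max(x,0) − c·Φ(x/c) ≤ ε − c·ln(1 − e^{−ε/c}) + c·max(ln|x|, 0) − c·ln(c), where the term c·max(ln|x|,0) is interpreted as 0 when x = 0. -/
open Real

lemma Phi_zero : Phi 0 = 0 := if_pos rfl

lemma one_sub_exp_neg_pos {s : ℝ} (hs : 0 < s) : 0 < 1 - exp (-s) :=
  sub_pos.mpr (exp_lt_one_iff.mpr (neg_lt_zero.mpr hs))

lemma one_sub_exp_neg_le (s : ℝ) : 1 - exp (-s) ≤ s := by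
  linarith [add_one_le_exp (-s)]

lemma exp_mul_one_sub_exp_neg (s : ℝ) : exp s * (1 - exp (-s)) = exp s - 1 := by
  rw [mul_sub, ← exp_add, add_neg_cancel, exp_zero, mul_one]

lemma exp_sub_one_div_eq {y : ℝ} (hy : y ≠ 0) :
    (exp y - 1) / y = exp (max y 0) * (1 - exp (-|y|)) / |y| := by
  rcases hy.lt_or_gt with h | h
  · rw [max_eq_right h.le, abs_of_neg h, exp_zero, one_mul, neg_neg, div_neg, ← neg_div, neg_sub]
  · rw [max_eq_left h.le, abs_of_pos h, exp_mul_one_sub_exp_neg]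

lemma posPart_sub_Phi {y : ℝ} (hy : y ≠ 0) :
    max y 0 - Phi y = log |y| - log (1 - exp (-|y|)) := by
  have hs : 0 < |y| := abs_pos.mpr hy
  rw [Phi, if_neg hy, exp_sub_one_div_eq hy, log_div (by positivity [one_sub_exp_neg_pos hs]) hs.ne',
    log_mul (exp_pos _).ne' (one_sub_exp_neg_pos hs).ne', log_exp]
  ring

lemma log_sub_log_one_sub_exp_neg_nonneg {s : ℝ} (hs : 0 < s) :
    0 ≤ log s - log (1 - exp (-s)) :=
  sub_nonneg.mpr (log_le_log (one_sub_exp_neg_pos hs) (one_sub_exp_neg_le s))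

lemma log_sub_log_one_sub_exp_neg_le_self {s : ℝ} (hs : 0 < s) :
    log s - log (1 - exp (-s)) ≤ s := by
  have h : log s ≤ log (exp s * (1 - exp (-s))) :=
    log_le_log hs (by rw [exp_mul_one_sub_exp_neg]; linarith [add_one_le_exp s])
  rw [log_mul (exp_pos s).ne' (one_sub_exp_neg_pos hs).ne', log_exp] at h
  linarith

lemma log_one_sub_exp_neg_le_log_one_sub_exp_neg {s t : ℝ} (ht : 0 < t) (hts : t ≤ s) :
    log (1 - exp (-t)) ≤ log (1 - exp (-s)) :=
  log_le_log (one_sub_exp_neg_pos ht) (by linarith [exp_le_exp.mpr (neg_le_neg hts)])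

lemma log_one_sub_exp_neg_div_add_log_nonpos {ε c : ℝ} (hε : 0 < ε) (hε1 : ε ≤ 1) (hc : 0 < c) :
    log (1 - exp (-(ε / c))) + log c ≤ 0 := by
  have h := log_le_log (one_sub_exp_neg_pos (div_pos hε hc)) (one_sub_exp_neg_le (ε / c))
  rw [log_div hε.ne' hc.ne'] at h
  linarith [log_nonpos hε.le hε1]

lemma posPart_sub_mul_Phi_div {x c : ℝ} (hx : x ≠ 0) (hc : 0 < c) :
    max x 0 - c * Phi (x / c) = c * (log |x / c| - log (1 - exp (-|x / c|))) := by
  rw [← posPart_sub_Phi (div_ne_zero hx hc.ne'), mul_sub, mul_max_of_nonneg _ _ hc.le,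
    mul_div_cancel₀ _ hc.ne', mul_zero]

theorem posPart_sub_mul_Phi_bounds (x c ε : ℝ) (hc : 0 < c) (hε : ε ∈ Set.Ioo (0 : ℝ) 1) :
    0 ≤ max x 0 - c * Phi (x / c) ∧
    max x 0 - c * Phi (x / c)
      ≤ ε - c * Real.log (1 - Real.exp (-ε / c)) + c * max (Real.log |x|) 0
        - c * Real.log c := by
  obtain ⟨hε0, hε1⟩ := hε
  rw [neg_div]
  have hε_le : ε ≤ ε - c * log (1 - exp (-(ε / c))) + c * max (log |x|) 0 - c * log c := by
    have := mul_nonpos_of_nonneg_of_nonpos hc.le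
      (log_one_sub_exp_neg_div_add_log_nonpos hε0 hε1.le hc)
    linarith [mul_add c (log (1 - exp (-(ε / c)))) (log c),
      mul_nonneg hc.le (le_max_right (log |x|) 0)]
  by_cases hx : x = 0
  · subst hx
    rw [zero_div, Phi_zero, max_self, mul_zero, sub_zero]
    exact ⟨le_rfl, hε0.le.trans hε_le⟩
  rw [posPart_sub_mul_Phi_div hx hc]
  have hs : 0 < |x / c| := abs_pos.mpr (div_ne_zero hx hc.ne')
  refine ⟨mul_nonneg hc.le (log_sub_log_one_sub_exp_neg_nonneg hs), ?_⟩
  rcases le_total |x / c| (ε / c) with hsmall | hlarge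
  · calc c * (log |x / c| - log (1 - exp (-|x / c|))) ≤ c * (ε / c) := by
          gcongr; exact (log_sub_log_one_sub_exp_neg_le_self hs).trans hsmall
      _ = ε := mul_div_cancel₀ _ hc.ne'
      _ ≤ _ := hε_le
  · have hlog : log |x| = log c + log |x / c| := by
      rw [← log_mul hc.ne' hs.ne', abs_div, abs_of_pos hc, mul_div_cancel₀ _ hc.ne']
    calc c * (log |x / c| - log (1 - exp (-|x / c|)))
        ≤ c * (log |x / c| - log (1 - exp (-(ε / c)))) :=
          mul_le_mul_of_nonneg_left (sub_le_sub_left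
            (log_one_sub_exp_neg_le_log_one_sub_exp_neg (div_pos hε0 hc) hlarge) _) hc.le
      _ ≤ _ := by nlinarith [mul_nonneg hc.le (sub_nonneg.mpr (le_max_left (log |x|) 0))]
end

section
/- For every fixed a ∈ ℝ, the function x ↦ x·Φ(a/x) is monotone nonincreasing on (0, ∞), where Φ(y) = ln((e^y − 1)/y) for y ≠ 0 and Φ(0) = 0. -/
/-!
For `c ≠ 0`, `(exp c - 1) / c` is the mean of `s ↦ exp (c s)` over `[0, 1]`, and raising the
integrand to a power `t ∈ (0, 1]` gives the mean for `t c`. Jensen's inequality for the concave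
map `u ↦ u ^ t` therefore yields `Phi (t c) ≤ t Phi c`, i.e. `Phi` is star-shaped about `0`.
With `t = x / y` and `c = a / x` this is `y Phi (a / y) ≤ x Phi (a / x)` for `0 < x ≤ y`.
-/

open Real MeasureTheory Set

lemma Phi_of_ne_zero {x : ℝ} (hx : x ≠ 0) : Phi x = log ((exp x - 1) / x) := if_neg hx

lemma expm1_div_pos {x : ℝ} (hx : x ≠ 0) : 0 < (exp x - 1) / x := by
  rcases hx.lt_or_gt with hneg | hpos
  · exact div_pos_of_neg_of_neg (by linarith [exp_lt_one_iff.2 hneg]) hneg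
  · exact div_pos (by linarith [add_one_lt_exp hx]) hpos

lemma setIntegral_Ioc_exp_mul {c : ℝ} (hc : c ≠ 0) :
    ∫ s in Ioc (0 : ℝ) 1, exp (c * s) = (exp c - 1) / c := by
  rw [← intervalIntegral.integral_of_le zero_le_one,
    intervalIntegral.integral_comp_mul_left (fun s => exp s) hc]
  simp [integral_exp, div_eq_inv_mul]

lemma expm1_div_mul_le_rpow {c t : ℝ} (hc : c ≠ 0) (ht0 : 0 < t) (ht1 : t ≤ 1) :
    (exp (t * c) - 1) / (t * c) ≤ ((exp c - 1) / c) ^ t := by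
  let μ : Measure ℝ := volume.restrict (Ioc 0 1)
  have : IsProbabilityMeasure μ := ⟨by simp [μ]⟩
  have hexp : Continuous fun s : ℝ => exp (c * s) := by fun_prop
  have hrpow : Continuous fun u : ℝ => u ^ t :=
    continuous_iff_continuousAt.2 fun u => continuousAt_rpow_const u t (Or.inr ht0.le)
  have jensen : ∫ s, exp (c * s) ^ t ∂μ ≤ (∫ s, exp (c * s) ∂μ) ^ t :=
    (concaveOn_rpow ht0.le ht1).le_map_integral hrpow.continuousOn isClosed_Ici
      (Filter.Eventually.of_forall fun s => (exp_pos _).le) hexp.integrableOn_Ioc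
      (hrpow.comp hexp).integrableOn_Ioc
  have hpow : ∀ s, exp (c * s) ^ t = exp (t * c * s) := fun s => by
    rw [← exp_mul]; ring_nf
  simp only [hpow] at jensen
  rwa [setIntegral_Ioc_exp_mul hc, setIntegral_Ioc_exp_mul (mul_ne_zero ht0.ne' hc)] at jensen

lemma Phi_mul_le (c : ℝ) {t : ℝ} (ht0 : 0 ≤ t) (ht1 : t ≤ 1) : Phi (t * c) ≤ t * Phi c := by
  rcases eq_or_ne c 0 with rfl | hc
  · simp [Phi]
  rcases ht0.eq_or_lt with rfl | ht0
  · simp [Phi]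
  have htc : t * c ≠ 0 := mul_ne_zero ht0.ne' hc
  rw [Phi_of_ne_zero htc, Phi_of_ne_zero hc, ← log_rpow (expm1_div_pos hc)]
  exact log_le_log (expm1_div_pos htc) (expm1_div_mul_le_rpow hc ht0 ht1)

theorem antitoneOn_mul_Phi (a : ℝ) :
    AntitoneOn (fun x : ℝ => x * Phi (a / x)) (Set.Ioi (0 : ℝ)) := by
  intro x hx y hy hxy
  simp only [mem_Ioi] at hx hy
  have hay : a / y = x / y * (a / x) := by field_simp
  calc y * Phi (a / y) = y * Phi (x / y * (a / x)) := by rw [hay]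
    _ ≤ y * (x / y * Phi (a / x)) :=
      mul_le_mul_of_nonneg_left (Phi_mul_le _ (div_pos hx hy).le ((div_le_one hy).2 hxy)) hy.le
    _ = x * Phi (a / x) := by field_simp
end

section
/- For every fixed real y, the limit as λ ↓ 0 of λ·Φ(y/λ) equals max(y, 0), and the convergence is monotone: λ·Φ(y/λ) is nonincreasing as λ increases on (0,∞). -/
open Filter Topology

lemma exp_sub_one_ne {x : ℝ} (hx : x ≠ 0) : Real.exp x - 1 ≠ 0 := by
  simp [sub_eq_zero, Real.exp_eq_one_iff, hx]

lemma sinh_key (x : ℝ) : x ^ 2 * Real.exp x ≤ (Real.exp x - 1) ^ 2 := by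
  have h1 : Real.exp x - 1 = Real.exp (x / 2) * (2 * Real.sinh (x / 2)) := by
    rw [Real.sinh_eq]
    have e1 : Real.exp (x/2) * Real.exp (x/2) = Real.exp x := by
      rw [← Real.exp_add]; ring_nf
    have e2 : Real.exp (x/2) * Real.exp (-(x/2)) = 1 := by
      rw [← Real.exp_add]; simp
    nlinarith [e1, e2]
  have h2 : (x / 2) ^ 2 ≤ (Real.sinh (x / 2)) ^ 2 := by
    rcases le_total 0 (x / 2) with h | h
    · nlinarith [Real.self_le_sinh_iff.mpr h]
    · have h3 : Real.sinh (x/2) ≤ x/2 := by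
        have := Real.self_le_sinh_iff.mpr (neg_nonneg.mpr h)
        rw [Real.sinh_neg] at this; linarith
      nlinarith [Real.sinh_nonpos_iff.mpr h]
  have hx2 : x ^ 2 = 4 * (x/2)^2 := by ring
  calc x ^ 2 * Real.exp x = Real.exp x * (4 * (x/2)^2) := by rw [hx2]; ring
    _ ≤ Real.exp x * (4 * (Real.sinh (x/2))^2) := by
        have := Real.exp_pos x; nlinarith
    _ = (Real.exp x - 1)^2 := by
        have e1 : Real.exp (x/2) ^ 2 = Real.exp x := by
          rw [pow_two, ← Real.exp_add]; ring_nf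
        rw [h1, mul_pow, e1]; ring

lemma phi_eq {x : ℝ} (hx : x ≠ 0) : Phi x = Real.log (Real.exp x - 1) - Real.log x := by
  simp only [Phi, if_neg hx, Real.log_div (exp_sub_one_ne hx) hx]

lemma hasDerivAt_phi {x : ℝ} (hx : x ≠ 0) :
    HasDerivAt Phi (Real.exp x / (Real.exp x - 1) - x⁻¹) x := by
  have h1 : HasDerivAt (fun z => Real.log (Real.exp z - 1) - Real.log z)
      (Real.exp x / (Real.exp x - 1) - x⁻¹) x :=
    (((Real.hasDerivAt_exp x).sub_const 1).log (exp_sub_one_ne hx)).sub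
      (Real.hasDerivAt_log hx)
  apply h1.congr_of_eventuallyEq
  filter_upwards [eventually_ne_nhds hx] with z hz using phi_eq hz

lemma hasDerivAt_phi' {x : ℝ} (hx : x ≠ 0) :
    HasDerivAt (fun z => Real.exp z / (Real.exp z - 1) - z⁻¹)
      ((x ^ 2)⁻¹ - Real.exp x / (Real.exp x - 1) ^ 2) x := by
  have hne := exp_sub_one_ne hx
  have hdiv : HasDerivAt (fun z => Real.exp z / (Real.exp z - 1))
      ((Real.exp x * (Real.exp x - 1) - Real.exp x * Real.exp x) / (Real.exp x - 1) ^ 2) x :=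
    (Real.hasDerivAt_exp x).div ((Real.hasDerivAt_exp x).sub_const 1) hne
  have h := hdiv.sub (hasDerivAt_inv hx)
  refine h.congr_deriv ?_
  field_simp
  ring

lemma continuousAt_phi (x : ℝ) : ContinuousAt Phi x := by
  rcases ne_or_eq x 0 with hx | rfl
  · exact (hasDerivAt_phi hx).continuousAt
  · rw [← continuousWithinAt_compl_self]
    have h := Real.hasDerivAt_exp 0
    rw [hasDerivAt_iff_tendsto_slope] at h
    have hslope : Tendsto (fun z : ℝ => (Real.exp z - 1) / z) (𝓝[≠] (0:ℝ)) (𝓝 1) := by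
      rw [Real.exp_zero] at h
      apply h.congr
      intro z
      simp [slope_def_field, Real.exp_zero]
    have hlog : Tendsto (fun z : ℝ => Real.log ((Real.exp z - 1) / z)) (𝓝[≠] (0:ℝ)) (𝓝 0) := by
      have := (Real.continuousAt_log one_ne_zero).tendsto
      rw [Real.log_one] at this
      exact this.comp hslope
    have hPhi0 : Phi 0 = 0 := by simp [Phi]
    unfold ContinuousWithinAt
    rw [hPhi0]
    apply hlog.congr'
    filter_upwards [self_mem_nhdsWithin] with z hz
    simp only [Phi, if_neg (Set.mem_compl_singleton_iff.mp hz)]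

lemma phi_second_nonneg {x : ℝ} (hx : x ≠ 0) :
    0 ≤ (x ^ 2)⁻¹ - Real.exp x / (Real.exp x - 1) ^ 2 := by
  have hne := exp_sub_one_ne hx
  have hsq : 0 < (Real.exp x - 1) ^ 2 := lt_of_le_of_ne (sq_nonneg _) (Ne.symm (pow_ne_zero 2 hne))
  have hx2 : 0 < x ^ 2 := lt_of_le_of_ne (sq_nonneg _) (Ne.symm (pow_ne_zero 2 hx))
  rw [sub_nonneg, inv_eq_one_div, div_le_div_iff₀ hsq hx2]
  nlinarith [sinh_key x]

lemma phi_convex_Ici : ConvexOn ℝ (Set.Ici (0:ℝ)) Phi := by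
  apply convexOn_of_hasDerivWithinAt2_nonneg (convex_Ici 0)
    (f' := fun z => Real.exp z / (Real.exp z - 1) - z⁻¹)
    (f'' := fun z => (z ^ 2)⁻¹ - Real.exp z / (Real.exp z - 1) ^ 2)
    (fun z _ => (continuousAt_phi z).continuousWithinAt)
  · rw [interior_Ici]
    exact fun z hz => (hasDerivAt_phi (ne_of_gt hz)).hasDerivWithinAt
  · rw [interior_Ici]
    exact fun z hz => (hasDerivAt_phi' (ne_of_gt hz)).hasDerivWithinAt
  · rw [interior_Ici]
    exact fun z hz => phi_second_nonneg (ne_of_gt hz)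

lemma phi_convex_Iic : ConvexOn ℝ (Set.Iic (0:ℝ)) Phi := by
  apply convexOn_of_hasDerivWithinAt2_nonneg (convex_Iic 0)
    (f' := fun z => Real.exp z / (Real.exp z - 1) - z⁻¹)
    (f'' := fun z => (z ^ 2)⁻¹ - Real.exp z / (Real.exp z - 1) ^ 2)
    (fun z _ => (continuousAt_phi z).continuousWithinAt)
  · rw [interior_Iic]
    exact fun z hz => (hasDerivAt_phi (ne_of_lt hz)).hasDerivWithinAt
  · rw [interior_Iic]
    exact fun z hz => (hasDerivAt_phi' (ne_of_lt hz)).hasDerivWithinAt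
  · rw [interior_Iic]
    exact fun z hz => phi_second_nonneg (ne_of_lt hz)

lemma slope_mono_pos {x1 x2 : ℝ} (h1 : 0 < x1) (h12 : x1 ≤ x2) : Phi x1 / x1 ≤ Phi x2 / x2 := by
  rcases eq_or_lt_of_le h12 with rfl | hlt
  · exact le_rfl
  have h2 : 0 < x2 := h1.trans hlt
  have hb : (0:ℝ) ≤ x1 / x2 := by positivity
  have ha : (0:ℝ) ≤ 1 - x1 / x2 := by
    rw [sub_nonneg]; exact (div_le_one h2).mpr h12
  have hcomb := phi_convex_Ici.2 (Set.self_mem_Ici) (Set.mem_Ici.mpr h2.le) ha hb (by ring)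
  rw [smul_eq_mul, smul_eq_mul, smul_eq_mul, smul_eq_mul, mul_zero, zero_add,
    div_mul_cancel₀ _ (ne_of_gt h2)] at hcomb
  have hPhi0 : Phi 0 = 0 := by simp [Phi]
  rw [hPhi0, mul_zero, zero_add] at hcomb
  rw [div_le_div_iff₀ h1 h2]
  have e : x1 / x2 * Phi x2 * x2 = x1 * Phi x2 := by field_simp
  nlinarith [mul_le_mul_of_nonneg_right hcomb h2.le]

lemma slope_mono_neg {x1 x2 : ℝ} (h2 : x2 < 0) (h12 : x1 ≤ x2) : Phi x1 / x1 ≤ Phi x2 / x2 := by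
  rcases eq_or_lt_of_le h12 with rfl | hlt
  · exact le_rfl
  have h1 : x1 < 0 := hlt.trans h2
  have hb : (0:ℝ) ≤ x2 / x1 := by
    rw [div_nonneg_iff]; right; exact ⟨h2.le, h1.le⟩
  have hb1 : x2 / x1 ≤ 1 := by
    have h := mul_le_mul_of_nonpos_right h12 (inv_nonpos.mpr h1.le)
    rw [mul_inv_cancel₀ (ne_of_lt h1)] at h
    simpa [div_eq_mul_inv] using h
  have ha : (0:ℝ) ≤ 1 - x2 / x1 := by linarith
  have hcomb := phi_convex_Iic.2 (Set.mem_Iic.mpr h1.le) (Set.self_mem_Iic) hb ha (by ring)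
  rw [smul_eq_mul, smul_eq_mul, smul_eq_mul, smul_eq_mul, mul_zero, add_zero,
    div_mul_cancel₀ _ (ne_of_lt h1)] at hcomb
  have hPhi0 : Phi 0 = 0 := by simp [Phi]
  rw [hPhi0, mul_zero, add_zero] at hcomb
  -- hcomb : Phi x2 ≤ x2 / x1 * Phi x1
  have key : Phi x1 * x2 ≤ Phi x2 * x1 := by
    have e : x2 / x1 * Phi x1 * x1 = Phi x1 * x2 := by
      rw [div_mul_eq_mul_div, div_mul_eq_mul_div, mul_div_assoc,
        div_self (ne_of_lt h1), mul_one]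
      ring
    have := mul_le_mul_of_nonpos_right hcomb h1.le
    rw [e] at this
    linarith
  have hx1x2 : 0 < x1 * x2 := mul_pos_of_neg_of_neg h1 h2
  calc Phi x1 / x1 = Phi x1 * x2 / (x1 * x2) := by
        rw [mul_div_mul_right _ _ (ne_of_lt h2)]
    _ ≤ Phi x2 * x1 / (x1 * x2) := by gcongr
    _ = Phi x2 / x2 := by
        rw [mul_comm x1 x2, mul_div_mul_right _ _ (ne_of_lt h1)]

theorem Phi_scaling_limit (y : ℝ) :
    Filter.Tendsto (fun lam : ℝ => lam * Phi (y / lam)) (nhdsWithin 0 (Set.Ioi 0))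
      (nhds (max y 0)) ∧
    AntitoneOn (fun lam : ℝ => lam * Phi (y / lam)) (Set.Ioi (0 : ℝ)) := by
  have hlam0 : Tendsto (fun lam : ℝ => lam) (𝓝[>] (0:ℝ)) (𝓝 0) :=
    tendsto_id.mono_right nhdsWithin_le_nhds
  have hinv : Tendsto (fun lam : ℝ => lam⁻¹) (𝓝[>] (0:ℝ)) atTop := tendsto_inv_nhdsGT_zero
  have hloglam : Tendsto (fun lam : ℝ => lam * Real.log lam) (𝓝[>] (0:ℝ)) (𝓝 0) := by
    have := tendsto_log_mul_rpow_nhdsGT_zero zero_lt_one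
    simp only [Real.rpow_one] at this
    simpa [mul_comm] using this
  constructor
  · rcases lt_trichotomy y 0 with hy | rfl | hy
    · -- y < 0
      rw [max_eq_right hy.le]
      have hbot : Tendsto (fun lam : ℝ => y / lam) (𝓝[>] (0:ℝ)) atBot := by
        simp only [div_eq_mul_inv]
        exact (tendsto_const_mul_atBot_of_neg hy).mpr hinv
      have hexp : Tendsto (fun lam : ℝ => Real.exp (y / lam)) (𝓝[>] (0:ℝ)) (𝓝 0) :=
        Real.tendsto_exp_atBot.comp hbot
      have hlog1 : Tendsto (fun lam : ℝ => Real.log (1 - Real.exp (y / lam)))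
          (𝓝[>] (0:ℝ)) (𝓝 0) := by
        have h1 : Tendsto (fun lam : ℝ => 1 - Real.exp (y / lam)) (𝓝[>] (0:ℝ)) (𝓝 1) := by
          simpa using tendsto_const_nhds.sub hexp
        have := (Real.continuousAt_log one_ne_zero).tendsto.comp h1
        simpa [Function.comp_def] using this
      have hmain : Tendsto (fun lam : ℝ => lam * Real.log (1 - Real.exp (y / lam))
          + (lam * Real.log lam - lam * Real.log (-y))) (𝓝[>] (0:ℝ)) (𝓝 0) := by
        have h1 := hlam0.mul hlog1
        have h2 := hlam0.mul_const (Real.log (-y))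
        simpa using h1.add (hloglam.sub h2)
      apply hmain.congr'
      filter_upwards [self_mem_nhdsWithin] with lam hlam
      have hl : (0:ℝ) < lam := hlam
      have hu : y / lam < 0 := div_neg_of_neg_of_pos hy hl
      rw [phi_eq (ne_of_lt hu)]
      have h1 : Real.log (Real.exp (y/lam) - 1) = Real.log (1 - Real.exp (y/lam)) := by
        rw [← Real.log_neg_eq_log (Real.exp (y/lam) - 1)]
        ring_nf
      have h2 : Real.log (y / lam) = Real.log (-y) - Real.log lam := by
        rw [← Real.log_neg_eq_log (y/lam), ← neg_div,
          Real.log_div (neg_ne_zero.mpr (ne_of_lt hy)) (ne_of_gt hl)]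
      rw [h1, h2]; ring
    · -- y = 0
      simp only [zero_div, max_self]
      have : (fun lam : ℝ => lam * Phi 0) = fun _ => (0:ℝ) := by
        funext lam; simp [Phi]
      rw [this]
      exact tendsto_const_nhds
    · -- y > 0
      rw [max_eq_left hy.le]
      have htop : Tendsto (fun lam : ℝ => y / lam) (𝓝[>] (0:ℝ)) atTop := by
        simp only [div_eq_mul_inv]
        exact hinv.const_mul_atTop hy
      have hbot : Tendsto (fun lam : ℝ => -(y / lam)) (𝓝[>] (0:ℝ)) atBot :=
        tendsto_neg_atTop_atBot.comp htop
      have hexp : Tendsto (fun lam : ℝ => Real.exp (-(y / lam))) (𝓝[>] (0:ℝ)) (𝓝 0) :=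
        Real.tendsto_exp_atBot.comp hbot
      have hlog1 : Tendsto (fun lam : ℝ => Real.log (1 - Real.exp (-(y / lam))))
          (𝓝[>] (0:ℝ)) (𝓝 0) := by
        have h1 : Tendsto (fun lam : ℝ => 1 - Real.exp (-(y / lam))) (𝓝[>] (0:ℝ)) (𝓝 1) := by
          simpa using tendsto_const_nhds.sub hexp
        have := (Real.continuousAt_log one_ne_zero).tendsto.comp h1
        simpa [Function.comp_def] using this
      have hmain : Tendsto (fun lam : ℝ => y + lam * Real.log (1 - Real.exp (-(y / lam)))
          + (lam * Real.log lam - lam * Real.log y)) (𝓝[>] (0:ℝ)) (𝓝 y) := by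
        have h1 := hlam0.mul hlog1
        have h2 := hlam0.mul_const (Real.log y)
        simpa using (tendsto_const_nhds.add h1).add (hloglam.sub h2)
      apply hmain.congr'
      filter_upwards [self_mem_nhdsWithin] with lam hlam
      have hl : (0:ℝ) < lam := hlam
      have hu : 0 < y / lam := div_pos hy hl
      have hlt1 : Real.exp (-(y/lam)) < 1 := by
        rw [← Real.exp_zero]
        exact Real.exp_lt_exp.mpr (by linarith)
      have hfact : Real.exp (y/lam) - 1 = Real.exp (y/lam) * (1 - Real.exp (-(y/lam))) := by
        rw [mul_sub, ← Real.exp_add, add_neg_cancel, Real.exp_zero, mul_one]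
      rw [phi_eq (ne_of_gt hu), hfact,
        Real.log_mul (Real.exp_ne_zero _) (by linarith), Real.log_exp,
        Real.log_div (ne_of_gt hy) (ne_of_gt hl)]
      have hyl : lam * (y / lam) = y := by field_simp
      linear_combination -hyl
  · -- antitone
    intro a ha b hb hab
    have ha' : (0:ℝ) < a := ha
    have hb' : (0:ℝ) < b := hb
    simp only
    rcases lt_trichotomy y 0 with hy | rfl | hy
    · have hx12 : y / a ≤ y / b := by
        rw [div_le_div_iff₀ ha' hb']
        exact mul_le_mul_of_nonpos_left hab hy.le
      have hx2 : y / b < 0 := div_neg_of_neg_of_pos hy hb'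
      have h := slope_mono_neg hx2 hx12
      have e1 : Phi (y/a) / (y/a) = a * Phi (y/a) / y := by
        rw [div_div_eq_mul_div]; ring
      have e2 : Phi (y/b) / (y/b) = b * Phi (y/b) / y := by
        rw [div_div_eq_mul_div]; ring
      rw [e1, e2] at h
      have h' := mul_le_mul_of_nonpos_right h hy.le
      rw [div_mul_cancel₀ _ (ne_of_lt hy), div_mul_cancel₀ _ (ne_of_lt hy)] at h'
      exact h'
    · simp [Phi]
    · have hx12 : y / b ≤ y / a := by
        rw [div_le_div_iff₀ hb' ha']
        exact mul_le_mul_of_nonneg_left hab hy.le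
      have hx1 : 0 < y / b := div_pos hy hb'
      have h := slope_mono_pos hx1 hx12
      have e1 : Phi (y/a) / (y/a) = a * Phi (y/a) / y := by
        rw [div_div_eq_mul_div]; ring
      have e2 : Phi (y/b) / (y/b) = b * Phi (y/b) / y := by
        rw [div_div_eq_mul_div]; ring
      rw [e1, e2] at h
      have h' := mul_le_mul_of_nonneg_right h hy.le
      rw [div_mul_cancel₀ _ (ne_of_gt hy), div_mul_cancel₀ _ (ne_of_gt hy)] at h'
      exact h'
end
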